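/- Let G and H be graphs, let X ⊆ V(G), and let φ be a minimal minor model of H in G. Then the range φ(V(H)) intersects at most |X| + |V(H)| + |E(H)| connected components of G − X. -/

import Mathlib

/-!
Charge every component `C` of `G - X` that meets the range to an element of `X`, `V(H)` or `E(H)`,
injectively. If `C` contains a whole branch set `φ w`, charge it to `w`; if `C` meets every edge of
`G` realizing an edge `uu'` of `H`, charge it to `uu'`. Otherwise take `v ∈ C ∩ φ w` and the
component `S` of `φ w - X` containing `v`. Then `φ w - S` still realizes every edge of `H`, so by
minimality it is disconnected: some vertex of `φ w - S` cannot be reached from a fixed reference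
vertex `r w ∈ X ∩ φ w`, and walking from it to `S` inside `φ w` gives a vertex `x ∈ X` adjacent to
`S` that `S` separates from `r w`. Charge `C` to `x`. Two components charged to the same `x` would
give disjoint such pieces `S₁, S₂`, and a walk in `φ w` from `r w` to `x` can always be rerouted to
avoid one of them.
-/

namespace FDel

open scoped Classical

noncomputable section

/-- Reachability inside the vertex set `S` of a simple graph. -/
def ReachIn {V : Type*} (G : SimpleGraph V) (S : Set V) (a b : V) : Prop :=
  Relation.ReflTransGen (fun u v => G.Adj u v ∧ u ∈ S ∧ v ∈ S) a b

/-- `C` is (the vertex set of) a connected component of the subgraph of `G` induced by `S`. -/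
def IsCompOf {V : Type*} (G : SimpleGraph V) (S C : Set V) : Prop :=
  ∃ v ∈ S, C = {w | w ∈ S ∧ ReachIn G S v w}

/-- `tdLE G n S` expresses that the treedepth of the subgraph of `G` induced by `S` is at
most `n`: the empty graph has treedepth `0`, and `G[S]` has treedepth at most `n+1` iff from
every connected component one may delete a vertex leaving treedepth at most `n`. -/
def tdLE {V : Type*} (G : SimpleGraph V) : ℕ → Set V → Prop
  | 0, S => S = ∅
  | n + 1, S => ∀ C, IsCompOf G S C → ∃ v ∈ C, tdLE G n (C \ {v})

/-- The treedepth of `G`. -/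
def treedepth {V : Type*} (G : SimpleGraph V) : ℕ := sInf {n | tdLE G n Set.univ}

/-- A minor model of `H` in `G` whose branch sets are contained in `A`: nonempty, connected,
pairwise disjoint branch sets, with every edge of `H` realized between the branch sets. -/
structure IsMinorModelOn {W V : Type*} (H : SimpleGraph W) (G : SimpleGraph V)
    (A : Set V) (φ : W → Set V) : Prop where
  sub : ∀ w, φ w ⊆ A
  nonempty : ∀ w, (φ w).Nonempty
  conn : ∀ w, ∀ a ∈ φ w, ∀ b ∈ φ w, ReachIn G (φ w) a b
  disj : ∀ w w', w ≠ w' → Disjoint (φ w) (φ w')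
  edge : ∀ w w', H.Adj w w' → ∃ a ∈ φ w, ∃ b ∈ φ w', G.Adj a b

/-- A (finite) graph given abstractly, as a simple graph on `Fin n`. -/
structure FinGraph where
  n : ℕ
  adj : SimpleGraph (Fin n)

/-- `G` has `H` as a minor with all branch sets inside `A` (i.e. `G[A]` has an `H`-minor). -/
def HasMinorOn {V : Type*} (G : SimpleGraph V) (A : Set V) (H : FinGraph) : Prop :=
  ∃ φ, IsMinorModelOn H.adj G A φ

/-- `Y` is an `F`-deletion set of `G[A]`: `Y ⊆ A` and `G[A ∖ Y]` has no `F`-minor. -/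
def FDelSetOn {V : Type*} (F : Set FinGraph) (G : SimpleGraph V) (A Y : Set V) : Prop :=
  Y ⊆ A ∧ ∀ H ∈ F, ¬ HasMinorOn G (A \ Y) H

/-- The minimum size `opt_F(G[A])` of an `F`-deletion set of `G[A]`. -/
def optF {V : Type*} (F : Set FinGraph) (G : SimpleGraph V) (A : Set V) : ℕ :=
  sInf (Set.ncard '' {Y | FDelSetOn F G A Y})

/-- `Y` is an optimal `F`-deletion set of `G`. -/
def IsOptFDel {V : Type*} (F : Set FinGraph) (G : SimpleGraph V) (Y : Set V) : Prop :=
  FDelSetOn F G Set.univ Y ∧ ∀ Y', FDelSetOn F G Set.univ Y' → Y.ncard ≤ Y'.ncard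

theorem _root_.Set.ncard_le_ncard_of_tagging {α β : Type*} {s : Set α} {t : Set β}
    (ht : t.Finite) (R : α → β → Prop) (htag : ∀ a ∈ s, ∃ b ∈ t, R a b)
    (hunique : ∀ a ∈ s, ∀ a' ∈ s, ∀ b ∈ t, R a b → R a' b → a = a') :
    s.ncard ≤ t.ncard := by
  rcases s.eq_empty_or_nonempty with rfl | ⟨a₀, ha₀⟩
  · simp
  obtain ⟨b₀, -, -⟩ := htag a₀ ha₀
  have : Nonempty β := ⟨b₀⟩
  choose! f hft hf using htag
  exact Set.ncard_le_ncard_of_injOn f hft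
    (fun a ha a' ha' h => hunique a ha a' ha' (f a) (hft a ha) (hf a ha) (h ▸ hf a' ha')) ht

section Reachability

variable {V : Type*} {G : SimpleGraph V} {S T : Set V} {a b c : V}

namespace ReachIn

theorem single (hab : G.Adj a b) (ha : a ∈ S) (hb : b ∈ S) : ReachIn G S a b :=
  Relation.ReflTransGen.single ⟨hab, ha, hb⟩

theorem trans (hab : ReachIn G S a b) (hbc : ReachIn G S b c) : ReachIn G S a c :=
  Relation.ReflTransGen.trans hab hbc

theorem symm (hab : ReachIn G S a b) : ReachIn G S b a := by
  induction hab with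
  | refl => exact Relation.ReflTransGen.refl
  | tail _ h ih => exact (single h.1.symm h.2.2 h.2.1).trans ih

theorem mono (hST : S ⊆ T) (hab : ReachIn G S a b) : ReachIn G T a b :=
  Relation.ReflTransGen.mono (fun _ _ h => ⟨h.1, hST h.2.1, hST h.2.2⟩) _ _ hab

theorem mem (hab : ReachIn G S a b) (ha : a ∈ S) : b ∈ S := by
  induction hab with
  | refl => exact ha
  | tail _ h => exact h.2.2

theorem exists_adj_exit (hab : ReachIn G S a b) (ha : a ∉ T) (hb : b ∈ T) :
    ∃ x ∉ T, ∃ t ∈ T, x ∈ S ∧ G.Adj x t ∧ ReachIn G (S \ T) a x := by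
  induction hab using Relation.ReflTransGen.head_induction_on with
  | refl => exact absurd hb ha
  | @head a c hac _ ih =>
    by_cases hc : c ∈ T
    · exact ⟨a, ha, c, hc, hac.2.1, hac.1, Relation.ReflTransGen.refl⟩
    · obtain ⟨x, hxT, t, ht, hxS, hxt, hcx⟩ := ih hc
      exact ⟨x, hxT, t, ht, hxS, hxt,
        (single (S := S \ T) hac.1 ⟨hac.2.1, ha⟩ ⟨hac.2.2, hc⟩).trans hcx⟩

/-- After its first visit to `S₁ ∪ S₂`, the walk can be continued to `x` inside the set it
entered, avoiding the other one. -/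
theorem diff_or_diff {Y S₁ S₂ : Set V} (hS₁Y : S₁ ⊆ Y) (hS₂Y : S₂ ⊆ Y) (hdisj : Disjoint S₁ S₂)
    (hS₁ : ∀ p ∈ S₁, ∀ q ∈ S₁, ReachIn G S₁ p q) (hS₂ : ∀ p ∈ S₂, ∀ q ∈ S₂, ReachIn G S₂ p q)
    {x s₁ s₂ : V} (ha : a ∉ S₁ ∪ S₂) (hx : x ∈ Y \ (S₁ ∪ S₂)) (hs₁ : s₁ ∈ S₁)
    (hxs₁ : G.Adj x s₁) (hs₂ : s₂ ∈ S₂) (hxs₂ : G.Adj x s₂) (hax : ReachIn G Y a x) :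
    ReachIn G (Y \ S₁) a x ∨ ReachIn G (Y \ S₂) a x := by
  have hx₁ : x ∈ Y \ S₁ := ⟨hx.1, fun h => hx.2 (Or.inl h)⟩
  have hx₂ : x ∈ Y \ S₂ := ⟨hx.1, fun h => hx.2 (Or.inr h)⟩
  have hS₁Y₂ : S₁ ⊆ Y \ S₂ := fun u hu => ⟨hS₁Y hu, hdisj.notMem_of_mem_left hu⟩
  have hS₂Y₁ : S₂ ⊆ Y \ S₁ := fun u hu => ⟨hS₂Y hu, hdisj.notMem_of_mem_right hu⟩
  obtain ⟨c', hc', c, hc, hc'Y, hc'c, hac'⟩ :=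
    (hax.trans (single hxs₁ hx.1 (hS₁Y hs₁))).exists_adj_exit ha (Or.inl hs₁)
  have hprefix (Z : Set V) (hZ : Y \ (S₁ ∪ S₂) ⊆ Z) : c' ∈ Z ∧ ReachIn G Z a c' :=
    ⟨hZ ⟨hc'Y, hc'⟩, hac'.mono hZ⟩
  rcases hc with hc | hc
  · obtain ⟨hc'Z, hac'Z⟩ := hprefix (Y \ S₂) (fun u hu => ⟨hu.1, fun h => hu.2 (Or.inr h)⟩)
    exact Or.inr <| hac'Z.trans <| (single hc'c hc'Z (hS₁Y₂ hc)).trans <|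
      ((hS₁ c hc s₁ hs₁).mono hS₁Y₂).trans (single hxs₁.symm (hS₁Y₂ hs₁) hx₂)
  · obtain ⟨hc'Z, hac'Z⟩ := hprefix (Y \ S₁) (fun u hu => ⟨hu.1, fun h => hu.2 (Or.inl h)⟩)
    exact Or.inl <| hac'Z.trans <| (single hc'c hc'Z (hS₂Y₁ hc)).trans <|
      ((hS₂ c hc s₂ hs₂).mono hS₂Y₁).trans (single hxs₂.symm (hS₂Y₁ hs₂) hx₁)

end ReachIn

namespace IsCompOf

theorem exists_mem (ha : a ∈ S) : ∃ C, IsCompOf G S C ∧ a ∈ C :=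
  ⟨_, ⟨a, ha, rfl⟩, ha, Relation.ReflTransGen.refl⟩

variable {C D : Set V}

theorem subset (hC : IsCompOf G S C) : C ⊆ S := by
  obtain ⟨v, -, rfl⟩ := hC
  exact fun _ h => h.1

theorem reachIn (hC : IsCompOf G S C) : ∀ p ∈ C, ∀ q ∈ C, ReachIn G C p q := by
  obtain ⟨v, -, rfl⟩ := hC
  have hroot : ∀ q, ReachIn G S v q → ReachIn G {u | u ∈ S ∧ ReachIn G S v u} v q := by
    intro q hq
    induction hq with
    | refl => exact Relation.ReflTransGen.refl
    | tail hvb hbc ih => exact ih.trans (.single hbc.1 ⟨hbc.2.1, hvb⟩ ⟨hbc.2.2, hvb.tail hbc⟩)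
  exact fun p hp q hq => (hroot p hp.2).symm.trans (hroot q hq.2)

theorem mem_of_reachIn (hC : IsCompOf G S C) (ha : a ∈ C) (hab : ReachIn G S a b) : b ∈ C := by
  obtain ⟨v, -, rfl⟩ := hC
  exact ⟨hab.mem ha.1, ha.2.trans hab⟩

theorem mem_of_adj (hC : IsCompOf G S C) (ha : a ∈ C) (hb : b ∈ S) (hab : G.Adj a b) : b ∈ C :=
  hC.mem_of_reachIn ha (.single hab (hC.subset ha) hb)

theorem subset_of_subset (hC : IsCompOf G S C) (hD : IsCompOf G T D) (hST : S ⊆ T)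
    (hCD : (C ∩ D).Nonempty) : C ⊆ D := by
  obtain ⟨u, huC, huD⟩ := hCD
  exact fun z hz => hD.mem_of_reachIn huD (((hC.reachIn u huC z hz).mono hC.subset).mono hST)

theorem eq_of_not_disjoint (hC : IsCompOf G S C) (hD : IsCompOf G S D) (hCD : ¬ Disjoint C D) :
    C = D := by
  rw [Set.not_disjoint_iff_nonempty_inter] at hCD
  exact (hC.subset_of_subset hD subset_rfl hCD).antisymm
    (hD.subset_of_subset hC subset_rfl (Set.inter_comm C D ▸ hCD))

theorem eq_of_adj (hC : IsCompOf G S C) (hD : IsCompOf G S D) (hab : G.Adj a b)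
    (ha : a ∈ C ∨ b ∈ C) (hb : a ∈ D ∨ b ∈ D) : C = D := by
  refine hC.eq_of_not_disjoint hD (Set.not_disjoint_iff.mpr ?_)
  rcases ha with ha | ha <;> rcases hb with hb | hb
  · exact ⟨a, ha, hb⟩
  · exact ⟨b, hC.mem_of_adj ha (hD.subset hb) hab, hb⟩
  · exact ⟨a, hC.mem_of_adj ha (hD.subset hb) hab.symm, hb⟩
  · exact ⟨b, ha, hb⟩

end IsCompOf

end Reachability

section Models

variable {V W : Type*}

theorem update_diff_subset (φ : W → Set V) (w : W) (T : Set V) (u : W) :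
    Function.update φ w (φ w \ T) u ⊆ φ u := by
  rcases eq_or_ne u w with rfl | hu
  · simp only [Function.update_self, Set.sdiff_subset]
  · simp only [Function.update_of_ne hu, subset_rfl]

theorem diff_subset_update_diff (φ : W → Set V) (w : W) (T : Set V) (u : W) :
    φ u \ T ⊆ Function.update φ w (φ w \ T) u := by
  rcases eq_or_ne u w with rfl | hu
  · simp only [Function.update_self, subset_rfl]
  · simp only [Function.update_of_ne hu, Set.sdiff_subset]

variable {G : SimpleGraph V} {H : SimpleGraph W} {φ : W → Set V}

theorem IsMinorModelOn.update_diff {A : Set V} (hφ : IsMinorModelOn H G A φ) {w : W}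
    {T : Set V} {r : V} (hr : r ∈ φ w \ T) (hconn : ∀ b ∈ φ w \ T, ReachIn G (φ w \ T) r b)
    (hedge : ∀ u u', H.Adj u u' → ∃ a ∈ φ u, ∃ b ∈ φ u', G.Adj a b ∧ a ∉ T ∧ b ∉ T) :
    IsMinorModelOn H G A (Function.update φ w (φ w \ T)) := by
  have hsub := update_diff_subset φ w T
  refine ⟨fun u => (hsub u).trans (hφ.sub u), fun u => ?_, fun u => ?_,
    fun u u' hu => (hφ.disj u u' hu).mono (hsub u) (hsub u'), fun u u' huu' => ?_⟩
  · rcases eq_or_ne u w with rfl | hu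
    · exact ⟨r, by simpa only [Function.update_self] using hr⟩
    · simpa only [Function.update_of_ne hu] using hφ.nonempty u
  · rcases eq_or_ne u w with rfl | hu
    · simp only [Function.update_self]
      exact fun a ha b hb => (hconn a ha).symm.trans (hconn b hb)
    · simpa only [Function.update_of_ne hu] using hφ.conn u
  · obtain ⟨a, ha, b, hb, hab, haT, hbT⟩ := hedge u u' huu'
    exact ⟨a, diff_subset_update_diff φ w T u ⟨ha, haT⟩,
      b, diff_subset_update_diff φ w T u' ⟨hb, hbT⟩, hab⟩

theorem exists_not_reachIn_diff_of_minimal (hφ : IsMinorModelOn H G Set.univ φ)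
    (hmin : ∀ φ' : W → Set V, IsMinorModelOn H G Set.univ φ' → ¬ ((⋃ w, φ' w) ⊂ (⋃ w, φ w)))
    {w : W} {T : Set V} (hT : (T ∩ φ w).Nonempty)
    (hedge : ∀ u u', H.Adj u u' → ∃ a ∈ φ u, ∃ b ∈ φ u', G.Adj a b ∧ a ∉ T ∧ b ∉ T)
    {r : V} (hr : r ∈ φ w \ T) : ∃ z ∈ φ w \ T, ¬ ReachIn G (φ w \ T) r z := by
  by_contra! hconn
  refine hmin _ (hφ.update_diff hr hconn hedge) (Set.ssubset_iff_of_subset ?_ |>.mpr ?_)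
  · exact Set.iUnion_mono (update_diff_subset φ w T)
  · obtain ⟨v, hvT, hvw⟩ := hT
    refine ⟨v, Set.mem_iUnion.mpr ⟨w, hvw⟩, fun hv => ?_⟩
    obtain ⟨u, hvu⟩ := Set.mem_iUnion.mp hv
    rcases eq_or_ne u w with rfl | hu
    · simp only [Function.update_self] at hvu
      exact hvu.2 hvT
    · simp only [Function.update_of_ne hu] at hvu
      exact (hφ.disj u w hu).notMem_of_mem_left hvu hvw

end Models

section Counting

variable {V W : Type*} {G : SimpleGraph V} {H : SimpleGraph W} {φ : W → Set V}

/-- How a component `C` of `G - X` that neither contains a branch set nor meets all realizations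
of an edge is charged to a vertex `x ∈ X`. -/
def IsCutAttachment (G : SimpleGraph V) (φ : W → Set V) (X : Set V) (r : W → V) (C : Set V)
    (x : V) : Prop :=
  ∃ w, x ∈ φ w ∧ ∃ S ⊆ C, IsCompOf G (φ w \ X) S ∧ (∃ s ∈ S, G.Adj x s) ∧
    ¬ ReachIn G (φ w \ S) (r w) x

theorem ncard_comps_containing_branchSet_le [Finite W] {S : Set V}
    (hne : ∀ w, (φ w).Nonempty) :
    {C | IsCompOf G S C ∧ ∃ w, φ w ⊆ C}.ncard ≤ Nat.card W := by
  rw [← Set.ncard_univ]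
  refine Set.ncard_le_ncard_of_tagging (Set.toFinite _) (fun C w => φ w ⊆ C)
    (fun C ⟨_, w, hw⟩ => ⟨w, Set.mem_univ w, hw⟩) ?_
  rintro C ⟨hC, -⟩ D ⟨hD, -⟩ w - hCw hDw
  obtain ⟨a, ha⟩ := hne w
  exact hC.eq_of_not_disjoint hD (Set.not_disjoint_iff.mpr ⟨a, hCw ha, hDw ha⟩)

theorem ncard_comps_meeting_all_realizations_le [Finite W] {S : Set V}
    (hedge : ∀ u u', H.Adj u u' → ∃ a ∈ φ u, ∃ b ∈ φ u', G.Adj a b) :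
    {C | IsCompOf G S C ∧ ∃ u u', H.Adj u u' ∧
      ∀ a ∈ φ u, ∀ b ∈ φ u', G.Adj a b → a ∈ C ∨ b ∈ C}.ncard ≤ H.edgeSet.ncard := by
  refine Set.ncard_le_ncard_of_tagging (Set.toFinite _)
    (fun C e => ∀ u u', e = s(u, u') → ∀ a ∈ φ u, ∀ b ∈ φ u', G.Adj a b → a ∈ C ∨ b ∈ C) ?_ ?_
  · rintro C ⟨-, u, u', huu', hmeet⟩
    refine ⟨s(u, u'), huu', fun v v' he => ?_⟩
    rcases Sym2.eq_iff.mp he with ⟨rfl, rfl⟩ | ⟨rfl, rfl⟩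
    · exact hmeet
    · exact fun a ha b hb hab => (hmeet b hb a ha hab.symm).symm
  · rintro C ⟨hC, -⟩ D ⟨hD, -⟩ e he hCe hDe
    induction e using Sym2.ind with
    | _ u u' =>
      obtain ⟨a, ha, b, hb, hab⟩ := hedge u u' he
      exact hC.eq_of_adj hD hab (hCe u u' rfl a ha b hb hab) (hDe u u' rfl a ha b hb hab)

theorem ncard_comps_with_cutAttachment_le [Finite V] {X : Set V} {r : W → V}
    (hdisj : ∀ w w', w ≠ w' → Disjoint (φ w) (φ w'))
    (hconn : ∀ w, ∀ a ∈ φ w, ∀ b ∈ φ w, ReachIn G (φ w) a b)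
    (hr : ∀ w, (X ∩ φ w).Nonempty → r w ∈ X ∩ φ w) :
    {C | IsCompOf G Xᶜ C ∧ ∃ x ∈ X, IsCutAttachment G φ X r C x}.ncard ≤ X.ncard := by
  refine Set.ncard_le_ncard_of_tagging (Set.toFinite X) (IsCutAttachment G φ X r)
    (fun C hC => hC.2) ?_
  rintro C ⟨hC, -⟩ D ⟨hD, -⟩ x hx ⟨w, hxw, S, hSC, hS, ⟨s, hs, hxs⟩, hrx⟩
    ⟨w', hxw', S', hS'D, hS', ⟨s', hs', hxs'⟩, hrx'⟩
  obtain rfl : w = w' := by_contra fun h => (hdisj _ _ h).notMem_of_mem_left hxw hxw'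
  by_contra hCD
  have hCD : Disjoint C D := by_contra fun h => hCD (hC.eq_of_not_disjoint hD h)
  obtain ⟨hrX, hrw⟩ := hr w ⟨x, hx, hxw⟩
  have hXS : ∀ y ∈ X, y ∉ S ∪ S' := fun y hy h =>
    h.elim (fun h => (hS.subset h).2 hy) (fun h => (hS'.subset h).2 hy)
  rcases (hconn w _ hrw x hxw).diff_or_diff (hS.subset.trans Set.sdiff_subset)
      (hS'.subset.trans Set.sdiff_subset) (hCD.mono hSC hS'D) hS.reachIn hS'.reachIn
      (hXS _ hrX) ⟨hxw, hXS x hx⟩ hs hxs hs' hxs' with h | h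
  exacts [hrx h, hrx' h]

theorem exists_cutAttachment_of_minimal (hφ : IsMinorModelOn H G Set.univ φ)
    (hmin : ∀ φ' : W → Set V, IsMinorModelOn H G Set.univ φ' → ¬ ((⋃ w, φ' w) ⊂ (⋃ w, φ w)))
    {X C : Set V} {r : W → V} (hr : ∀ w, (X ∩ φ w).Nonempty → r w ∈ X ∩ φ w)
    (hC : IsCompOf G Xᶜ C) {v : V} {w : W} (hvC : v ∈ C) (hvw : v ∈ φ w) (hwC : ¬ φ w ⊆ C)
    (havoid : ∀ u u', H.Adj u u' → ∃ a ∈ φ u, ∃ b ∈ φ u', G.Adj a b ∧ a ∉ C ∧ b ∉ C) :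
    ∃ x ∈ X, IsCutAttachment G φ X r C x := by
  obtain ⟨S, hS, hvS⟩ := IsCompOf.exists_mem (G := G) (S := φ w \ X) ⟨hvw, hC.subset hvC⟩
  have hSC : S ⊆ C := hS.subset_of_subset hC (fun _ h => h.2) ⟨v, hvS, hvC⟩
  have hattach : ∀ x ∈ φ w, x ∉ S → ∀ s ∈ S, G.Adj x s → x ∈ X := fun x hxw hxS s hs hxs =>
    by_contra fun hxX => hxS (hS.mem_of_adj hs ⟨hxw, hxX⟩ hxs.symm)
  obtain ⟨y, hyw, hyC⟩ := Set.not_subset.mp hwC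
  obtain ⟨x₀, hx₀S, s₀, hs₀, hx₀w, hx₀s₀, -⟩ :=
    (hφ.conn w y hyw v hvw).exists_adj_exit (fun h => hyC (hSC h)) hvS
  obtain ⟨hrX, hrw⟩ := hr w ⟨x₀, hattach x₀ hx₀w hx₀S s₀ hs₀ hx₀s₀, hx₀w⟩
  have havoidS : ∀ u u', H.Adj u u' → ∃ a ∈ φ u, ∃ b ∈ φ u', G.Adj a b ∧ a ∉ S ∧ b ∉ S :=
    fun u u' huu' =>
      let ⟨a, ha, b, hb, hab, haC, hbC⟩ := havoid u u' huu'
      ⟨a, ha, b, hb, hab, fun h => haC (hSC h), fun h => hbC (hSC h)⟩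
  obtain ⟨z, hz, hrz⟩ := exists_not_reachIn_diff_of_minimal hφ hmin ⟨v, hvS, hvw⟩ havoidS
    ⟨hrw, fun h => (hS.subset h).2 hrX⟩
  obtain ⟨x, hxS, s, hs, hxw, hxs, hzx⟩ := (hφ.conn w z hz.1 v hvw).exists_adj_exit hz.2 hvS
  exact ⟨x, hattach x hxw hxS s hs hxs, w, hxw, S, hSC, hS, ⟨s, hs, hxs⟩,
    fun hrx => hrz (hrx.trans hzx.symm)⟩

end Counting

/-- Let `G`, `H` be graphs, `X ⊆ V(G)`, and `φ` a minimal minor model of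
`H` in `G`. Then the range `⋃ w, φ w` intersects at most `|X| + |V(H)| + |E(H)|` connected
components of `G − X`. -/
theorem stmt3 {V W : Type*} [Fintype V] [Fintype W]
    (G : SimpleGraph V) (H : SimpleGraph W) (X : Set V) (φ : W → Set V)
    (hmodel : IsMinorModelOn H G Set.univ φ)
    (hminimal : ∀ φ' : W → Set V, IsMinorModelOn H G Set.univ φ' →
      ¬ ((⋃ w, φ' w) ⊂ (⋃ w, φ w))) :
    {C : Set V | IsCompOf G Xᶜ C ∧ (C ∩ ⋃ w, φ w).Nonempty}.ncard
      ≤ X.ncard + Fintype.card W + H.edgeSet.ncard := by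
  have hbase : ∀ w, ∃ ρ, (X ∩ φ w).Nonempty → ρ ∈ X ∩ φ w := fun w =>
    (em (X ∩ φ w).Nonempty).elim (fun h => ⟨h.some, fun _ => h.some_mem⟩)
      (fun h => ⟨(hmodel.nonempty w).some, fun h' => absurd h' h⟩)
  choose r hr using hbase
  set 𝒞X := {C | IsCompOf G Xᶜ C ∧ ∃ x ∈ X, IsCutAttachment G φ X r C x}
  set 𝒞W := {C | IsCompOf G Xᶜ C ∧ ∃ w, φ w ⊆ C}
  set 𝒞E := {C | IsCompOf G Xᶜ C ∧ ∃ u u', H.Adj u u' ∧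
    ∀ a ∈ φ u, ∀ b ∈ φ u', G.Adj a b → a ∈ C ∨ b ∈ C}
  have hcover : {C : Set V | IsCompOf G Xᶜ C ∧ (C ∩ ⋃ w, φ w).Nonempty} ⊆ 𝒞X ∪ 𝒞W ∪ 𝒞E := by
    rintro C ⟨hC, v, hvC, hv⟩
    obtain ⟨w, hvw⟩ := Set.mem_iUnion.mp hv
    by_cases hwC : φ w ⊆ C
    · exact Or.inl (Or.inr ⟨hC, w, hwC⟩)
    by_cases hmeet : ∃ u u', H.Adj u u' ∧ ∀ a ∈ φ u, ∀ b ∈ φ u', G.Adj a b → a ∈ C ∨ b ∈ C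
    · exact Or.inr ⟨hC, hmeet⟩
    push Not at hmeet
    exact Or.inl (Or.inl
      ⟨hC, exists_cutAttachment_of_minimal hmodel hminimal hr hC hvC hvw hwC hmeet⟩)
  calc _ ≤ (𝒞X ∪ 𝒞W ∪ 𝒞E).ncard := Set.ncard_le_ncard hcover
    _ ≤ 𝒞X.ncard + 𝒞W.ncard + 𝒞E.ncard :=
      (Set.ncard_union_le _ _).trans (by gcongr; exact Set.ncard_union_le _ _)
    _ ≤ X.ncard + Fintype.card W + H.edgeSet.ncard := by
      gcongr
      · exact ncard_comps_with_cutAttachment_le hmodel.disj hmodel.conn hr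
      · rw [← Nat.card_eq_fintype_card]
        exact ncard_comps_containing_branchSet_le hmodel.nonempty
      · exact ncard_comps_meeting_all_realizations_le hmodel.edge

end

end FDel
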